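/- For every n ∈ ℕ, every open subset U ⊆ K^n, and every K-analytic map f : U → K with f(U) ⊆ H, the map f is locally constant. (Thus H is a constancy-enforcing subset of K.) -/

import Mathlib

/- CONTEXT: Let `𝔽` be a finite field of order `q` and `K = 𝔽((X))` the field of formal
Laurent series over `𝔽` with its X-adic absolute value `vabs` (with `|X| = q⁻¹`), realized
as `LaurentSeries 𝔽` with its valuation topology.  `K^n` is `Fin n → K` with the product
(= maximum-norm) topology.  `H := {∑_{k=0}^∞ a_k X^{2^k} : (a_k) ∈ 𝔽^ℕ}`.  A map
`f : U → K` on an open set `U ⊆ K^n` is `K`-analytic if around every point it is given by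
a convergent power series in `n` variables (the sum being the limit of the net of finite
partial sums, i.e. `HasSum`). -/

noncomputable section

open Filter Topology

section Aux

open Multiplicative
open scoped WithZero

variable {F : Type} [Field F]

/-- shorthand for the coercion `ℤ → ℤᵐ⁰`. -/
def ofZ (t : ℤ) : ℤᵐ⁰ := ((Multiplicative.ofAdd t : Multiplicative ℤ) : ℤᵐ⁰)

lemma ofZ_le_ofZ {a b : ℤ} (h : a ≤ b) : ofZ a ≤ ofZ b := by
  unfold ofZ
  rw [WithZero.coe_le_coe]
  exact Multiplicative.ofAdd_le.mpr h

lemma ofZ_mul (a b : ℤ) : ofZ a * ofZ b = ofZ (a + b) := by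
  unfold ofZ
  rw [← WithZero.coe_mul, ← ofAdd_add]

lemma ofZ_ne_zero (a : ℤ) : ofZ a ≠ 0 := WithZero.coe_ne_zero

lemma ofZ_pos (a : ℤ) : (0 : ℤᵐ⁰) < ofZ a := WithZero.zero_lt_coe _

lemma one_eq_ofZ : (1 : ℤᵐ⁰) = ofZ 0 := by
  unfold ofZ
  rw [ofAdd_zero, WithZero.coe_one]

lemma val_le_ofZ_iff {D : ℤ} {f : LaurentSeries F} :
    Valued.v f ≤ ofZ (-D) ↔ ∀ n < D, f.coeff n = 0 :=
  LaurentSeries.valuation_le_iff_coeff_lt_eq_zero F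

lemma val_single (s : ℤ) :
    Valued.v (HahnSeries.single s (1 : F) : LaurentSeries F) = ofZ (-s) :=
  LaurentSeries.valuation_single_zpow F s

lemma val_mem_nhds {s : Set (LaurentSeries F)} {x : LaurentSeries F} :
    s ∈ 𝓝 x ↔ ∃ γ : ℤᵐ⁰ˣ, {y | Valued.v (y - x) < (γ : ℤᵐ⁰)} ⊆ s := by
  rw [Valued.mem_nhds]
  constructor
  · rintro ⟨γ, hγ⟩
    refine ⟨Units.mk0 (MonoidWithZeroHom.ValueGroup₀.embedding γ.1) ?_, fun y hy => hγ ?_⟩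
    · exact (map_ne_zero_iff _ MonoidWithZeroHom.ValueGroup₀.embedding_injective).mpr γ.ne_zero
    · simp only [Set.mem_setOf_eq, Units.val_mk0] at hy
      rw [Set.mem_setOf_eq, Valuation.restrict_lt_iff_lt_embedding]
      exact hy
  · rintro ⟨γ, hγ⟩
    have hγe : (γ : ℤᵐ⁰) = Valued.v
        (HahnSeries.single (-WithZero.log (γ : ℤᵐ⁰)) (1 : F) : LaurentSeries F) := by
      rw [val_single, neg_neg]; exact (WithZero.exp_log γ.ne_zero).symm
    refine ⟨Units.mk0 (Valued.v.restrict
      (HahnSeries.single (-WithZero.log (γ : ℤᵐ⁰)) (1 : F) : LaurentSeries F)) ?_,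
      fun y hy => hγ ?_⟩
    · rw [ne_eq, map_eq_zero]; exact HahnSeries.single_ne_zero one_ne_zero
    · simp only [Set.mem_setOf_eq, Units.val_mk0, Valuation.restrict_lt_iff] at hy
      rw [Set.mem_setOf_eq, hγe]; exact hy

/-- a closed ball is closed in a valued field (here: Laurent series). -/
lemma isClosed_valball (γ : ℤᵐ⁰) : IsClosed {y : LaurentSeries F | Valued.v y ≤ γ} := by
  rw [← isOpen_compl_iff, isOpen_iff_mem_nhds]
  intro y hy
  simp only [Set.mem_compl_iff, Set.mem_setOf_eq, not_le] at hy
  have hy0 : Valued.v y ≠ 0 := (zero_le'.trans_lt hy).ne'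
  rw [val_mem_nhds]
  refine ⟨Units.mk0 _ hy0, fun w hw => ?_⟩
  simp only [Units.val_mk0, Set.mem_setOf_eq] at hw
  have hvw : Valued.v w = Valued.v y := by
    have := Valued.v.map_add_eq_of_lt_right (x := w - y) (y := y) hw
    simpa using this
  simp only [Set.mem_compl_iff, Set.mem_setOf_eq, not_le, hvw]
  exact hy

lemma val_hasSum_le {ι : Type*} {h : ι → LaurentSeries F} {x : LaurentSeries F} {γ : ℤᵐ⁰}
    (hs : HasSum h x) (hb : ∀ i, Valued.v (h i) ≤ γ) : Valued.v x ≤ γ := by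
  have hfin : ∀ s : Finset ι, Valued.v (∑ i ∈ s, h i) ≤ γ :=
    fun s => Valuation.map_sum_le _ (fun i _ => hb i)
  exact (isClosed_valball γ).mem_of_tendsto hs (Eventually.of_forall hfin)

/-- open balls are open. -/
lemma isOpen_valball (c : LaurentSeries F) (u : ℤᵐ⁰ˣ) :
    IsOpen {y : LaurentSeries F | Valued.v (y - c) < (u : ℤᵐ⁰)} := by
  rw [isOpen_iff_mem_nhds]
  intro y hy
  rw [val_mem_nhds]
  refine ⟨u, fun w hw => ?_⟩
  simp only [Set.mem_setOf_eq] at hw hy ⊢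
  have hrw : w - c = (w - y) + (y - c) := by ring
  rw [hrw]
  exact lt_of_le_of_lt (Valued.v.map_add _ _) (max_lt hw hy)

instance fiberFintype (n m : ℕ) : Fintype {α : Fin n → ℕ // ∑ i, α i = m} :=
  Fintype.subtype (Finset.Nat.antidiagonalTuple n m)
    (fun _ => Finset.Nat.mem_antidiagonalTuple)

lemma hasSum_group {n : ℕ} (c : (Fin n → ℕ) → LaurentSeries F) {x : LaurentSeries F}
    (h : HasSum c x) :
    HasSum (fun m : ℕ => ∑ α : {α : Fin n → ℕ // ∑ i, α i = m}, c α.1) x :=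
  HasSum.sigma ((Equiv.sigmaFiberEquiv (fun α : Fin n → ℕ => ∑ i, α i)).hasSum_iff.mpr h)
    (fun _ => hasSum_fintype _)

lemma pow2_gap {A m : ℤ} {k₁ k₂ : ℕ} (h1 : A = 2 ^ k₁) (h2 : A + m = 2 ^ k₂)
    (hm : 0 < m) (hA : m < A) : False := by
  have hk : k₁ < k₂ := by
    by_contra h
    push_neg at h
    have h' : (2 : ℤ) ^ k₂ ≤ 2 ^ k₁ := by
      exact_mod_cast Nat.pow_le_pow_right (by norm_num) h
    linarith
  have hpow : (2 : ℤ) ^ (k₁ + 1) ≤ 2 ^ k₂ := by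
    exact_mod_cast Nat.pow_le_pow_right (by norm_num) hk
  have h2' : (2 : ℤ) ^ (k₁ + 1) = 2 * 2 ^ k₁ := by ring
  linarith

end Aux

open Multiplicative
open scoped WithZero

variable (𝔽 : Type) [Field 𝔽] [Fintype 𝔽]

open Classical in
/-- The X-adic absolute value on `𝔽((X))`, with `|X| = q⁻¹` where `q = #𝔽`. -/
def vabs (z : LaurentSeries 𝔽) : ℝ :=
  if z = 0 then 0 else (Fintype.card 𝔽 : ℝ) ^ (-z.order)

/-- `H = {∑_{k=0}^∞ a_k X^{2^k} : (a_k) ∈ 𝔽^ℕ}`: the Laurent series whose support is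
contained in `{2^k : k ∈ ℕ}`. -/
def Hset : Set (LaurentSeries 𝔽) :=
  {z | ∀ j : ℤ, z.coeff j ≠ 0 → ∃ k : ℕ, j = 2 ^ k}

/-- `f : U → K`, `U ⊆ K^n` open, is `K`-analytic: around every point `z₀ ∈ U` it is given
by a convergent power series `∑_α a_α (z - z₀)^α` (multi-index notation). -/
def AnalyticOnOpen (n : ℕ) (U : Set (Fin n → LaurentSeries 𝔽))
    (f : (Fin n → LaurentSeries 𝔽) → LaurentSeries 𝔽) : Prop :=
  ∀ z₀ ∈ U, ∃ (a : (Fin n → ℕ) → LaurentSeries 𝔽) (t : Set (Fin n → LaurentSeries 𝔽)),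
    IsOpen t ∧ z₀ ∈ t ∧ t ⊆ U ∧
      ∀ z ∈ t, HasSum (fun α : Fin n → ℕ =>
        a α * ∏ i, (z i - z₀ i) ^ α i) (f z)

set_option maxHeartbeats 2000000 in
/-- for every `n ∈ ℕ`, every open `U ⊆ K^n` and every `K`-analytic map
`f : U → K` with `f(U) ⊆ H`, the map `f` is locally constant; thus `H` is a
constancy-enforcing subset of `K`. -/
theorem analytic_map_into_H_locally_constant_multivariable
    (n : ℕ) (U : Set (Fin n → LaurentSeries 𝔽)) (hU : IsOpen U)
    (f : (Fin n → LaurentSeries 𝔽) → LaurentSeries 𝔽)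
    (hf : AnalyticOnOpen 𝔽 n U f)
    (hfH : ∀ z ∈ U, f z ∈ Hset 𝔽) :
    ∀ z₀ ∈ U, ∃ t : Set (Fin n → LaurentSeries 𝔽),
      IsOpen t ∧ z₀ ∈ t ∧ t ⊆ U ∧ ∀ z ∈ t, f z = f z₀ := by
  classical
  intro z₀ hz₀
  obtain ⟨a, t, ht_open, hz₀t, htU, hsum⟩ := hf z₀ hz₀
  -- extract a polydisc inside `t`
  have htn : t ∈ 𝓝 z₀ := ht_open.mem_nhds hz₀t
  rw [nhds_pi, Filter.mem_pi] at htn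
  obtain ⟨I, _hIfin, V, hV, hVt⟩ := htn
  choose γ hγ using fun i => (val_mem_nhds.mp (hV i))
  obtain ⟨T, hT⟩ := (Set.finite_range
    (fun i => Multiplicative.toAdd (WithZero.unitsWithZeroEquiv (γ i)))).bddBelow
  set B : Set (Fin n → LaurentSeries 𝔽) :=
    {z | ∀ i, Valued.v (z i - z₀ i) < ofZ T} with hBdef
  have hBt : B ⊆ t := by
    intro z hz
    apply hVt
    intro i _
    apply hγ i
    have h1 : ofZ T ≤ (γ i : ℤᵐ⁰) := by
      have h2 : (γ i : ℤᵐ⁰) =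
          ofZ (Multiplicative.toAdd (WithZero.unitsWithZeroEquiv (γ i))) := by
        unfold ofZ
        rw [ofAdd_toAdd]
        exact (WithZero.coe_unzero (γ i).ne_zero).symm
      rw [h2]
      exact ofZ_le_ofZ (hT ⟨i, rfl⟩)
    exact Set.mem_setOf_eq ▸ lt_of_lt_of_le (hz i) h1
  refine ⟨B, ?_, ?_, fun z hz => htU (hBt hz), ?_⟩
  · -- openness
    have : B = ⋂ i, (fun z : Fin n → LaurentSeries 𝔽 => z i) ⁻¹'
        {y | Valued.v (y - z₀ i) < ((Units.mk0 (ofZ T) (ofZ_ne_zero T) : ℤᵐ⁰ˣ) : ℤᵐ⁰)} := by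
      ext z
      simp [hBdef, Set.mem_iInter]
    rw [this]
    exact isOpen_iInter_of_finite fun i =>
      (isOpen_valball (z₀ i) _).preimage (continuous_apply i)
  · -- z₀ ∈ B
    intro i
    simp only [sub_self, map_zero]
    exact ofZ_pos T
  · -- local constancy
    intro z hz
    set w : Fin n → LaurentSeries 𝔽 := fun i => z i - z₀ i with hwdef
    set c : (Fin n → ℕ) → LaurentSeries 𝔽 := fun α => a α * ∏ i, w i ^ α i with hcdef
    set p : LaurentSeries 𝔽 → (Fin n → LaurentSeries 𝔽) :=
      fun s i => z₀ i + s * w i with hpdef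
    have hpB : ∀ s : LaurentSeries 𝔽, Valued.v s ≤ 1 → p s ∈ B := by
      intro s hs i
      have h1 : p s i - z₀ i = s * w i := by simp [hpdef]
      rw [h1, map_mul]
      calc Valued.v s * Valued.v (w i) ≤ 1 * Valued.v (w i) := mul_le_mul_left hs _
        _ = Valued.v (w i) := one_mul _
        _ < ofZ T := hz i
    have hsum' : ∀ s : LaurentSeries 𝔽, Valued.v s ≤ 1 →
        HasSum (fun α : Fin n → ℕ => c α * s ^ (∑ i, α i)) (f (p s)) := by
      intro s hs
      have h0 := hsum (p s) (hBt (hpB s hs))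
      have hfun : (fun α : Fin n → ℕ => a α * ∏ i, (p s i - z₀ i) ^ α i)
          = (fun α : Fin n → ℕ => c α * s ^ (∑ i, α i)) := by
        funext α
        simp only [hcdef, hpdef, add_sub_cancel_left, mul_pow, Finset.prod_mul_distrib,
          Finset.prod_pow_eq_pow_sum]
        ring
      rwa [hfun] at h0
    set b : ℕ → LaurentSeries 𝔽 :=
      fun m => ∑ α : {α : Fin n → ℕ // ∑ i, α i = m}, c α.1 with hbdef
    have hgroup : ∀ s : LaurentSeries 𝔽, Valued.v s ≤ 1 →
        HasSum (fun m : ℕ => b m * s ^ m) (f (p s)) := by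
      intro s hs
      have h0 := hasSum_group (fun α : Fin n → ℕ => c α * s ^ (∑ i, α i)) (hsum' s hs)
      have hfun : (fun m : ℕ => ∑ α : {α : Fin n → ℕ // ∑ i, α i = m},
            (c α.1 * s ^ (∑ i, α.1 i)))
          = fun m : ℕ => b m * s ^ m := by
        funext m
        rw [hbdef, Finset.sum_mul]
        exact Finset.sum_congr rfl fun α _ => by rw [α.2]
      rwa [hfun] at h0
    -- b 0 = f z₀
    have hp0 : p 0 = z₀ := by funext i; simp [hpdef]
    have hb0 : b 0 = f z₀ := by
      have h0 := hgroup 0 (by simp)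
      rw [hp0] at h0
      have hfun : (fun m : ℕ => b m * (0 : LaurentSeries 𝔽) ^ m)
          = fun m : ℕ => if m = 0 then b 0 else 0 := by
        funext m
        cases m with
        | zero => simp
        | succ k => simp [zero_pow (Nat.succ_ne_zero k)]
      rw [hfun] at h0
      exact (hasSum_ite_eq 0 (b 0)).unique h0
    -- all higher coefficients vanish
    have hbzero : ∀ m : ℕ, 0 < m → b m = 0 := by
      by_contra hcon
      push_neg at hcon
      obtain ⟨m', hm'pos, hbm'⟩ := hcon
      have hex : ∃ m, 0 < m ∧ b m ≠ 0 := ⟨m', hm'pos, hbm'⟩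
      set m₀ := Nat.find hex with hm₀def
      obtain ⟨hm₀pos, hbm₀⟩ := Nat.find_spec hex
      have hmin : ∀ m, 0 < m → m < m₀ → b m = 0 := by
        intro m h1 h2
        by_contra h3
        exact Nat.find_min hex h2 ⟨h1, h3⟩
      obtain ⟨d, hd⟩ : ∃ d : ℤ, (b m₀).coeff d ≠ 0 := by
        by_contra h
        push_neg at h
        exact hbm₀ (HahnSeries.ext (funext h))
      -- summability at s = 1 gives a tail bound
      have hsum1 : HasSum (fun m : ℕ => b m * (1 : LaurentSeries 𝔽) ^ m) (f (p 1)) :=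
        hgroup 1 (by simp)
      have htend : Tendsto b atTop (𝓝 0) := by
        have := hsum1.summable.tendsto_atTop_zero
        simpa using this
      have hev : ∀ᶠ m in atTop, Valued.v (b m) ≤ ofZ (-(d + 1)) := by
        have hmem : {x : LaurentSeries 𝔽 | Valued.v x < ofZ (-(d + 1))} ∈
            𝓝 (0 : LaurentSeries 𝔽) := by
          rw [val_mem_nhds]
          exact ⟨Units.mk0 (ofZ (-(d+1))) (ofZ_ne_zero _), fun y hy => by simpa using hy⟩
        filter_upwards [htend hmem] with m hm using le_of_lt hm
      obtain ⟨M, hM⟩ := eventually_atTop.mp hev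
      have hT' : ∀ m : ℕ, ∃ t : ℤ, Valued.v (b m) ≤ ofZ t := by
        intro m
        rcases eq_or_ne (Valued.v (b m)) 0 with h | h
        · exact ⟨0, by rw [h]; exact zero_le'⟩
        · obtain ⟨u, hu⟩ := WithZero.ne_zero_iff_exists.mp h
          exact ⟨Multiplicative.toAdd u, by rw [← hu]; unfold ofZ; rw [ofAdd_toAdd]⟩
      choose T' hT'spec using hT'
      set J : ℕ := (Finset.range M).sup (fun m => (T' m + d + 1).toNat)
          + M + (m₀ + 1 - d).toNat with hJdef
      -- key claim
      have key : ∀ j : ℕ, J ≤ j → ∃ k : ℕ, d + (j : ℤ) * m₀ = 2 ^ k := by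
        intro j hj
        set s : LaurentSeries 𝔽 := HahnSeries.single (j : ℤ) 1 with hsdef
        have hvs : Valued.v s ≤ 1 := by
          rw [hsdef, val_single, one_eq_ofZ]
          exact ofZ_le_ofZ (by omega)
        have hpow : ∀ m : ℕ, s ^ m = HahnSeries.single ((j : ℤ) * m) (1 : 𝔽) := by
          intro m
          rw [hsdef, HahnSeries.single_pow, one_pow, nsmul_eq_mul, mul_comm]
        have hsum_j := hgroup s hvs
        have h0 := hsum_j.update 0 0
        have h2 := h0.update m₀ 0
        set Y : LaurentSeries 𝔽 :=
          0 - Function.update (fun m : ℕ => b m * s ^ m) 0 0 m₀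
            + (0 - b 0 * s ^ 0 + f (p s)) with hYdef
        have hY2 : HasSum
            (Function.update (Function.update (fun m : ℕ => b m * s ^ m) 0 0) m₀ 0) Y := h2
        -- bound all terms
        have hbound : ∀ m : ℕ,
            Valued.v (Function.update (Function.update
                (fun m : ℕ => b m * s ^ m) 0 0) m₀ 0 m)
              ≤ ofZ (-(d + (j : ℤ) * m₀ + 1)) := by
          intro m
          rcases eq_or_ne m m₀ with h | hmm₀
          · rw [h, Function.update_self, map_zero]; exact zero_le'
          rcases eq_or_ne m 0 with h | hm0
          · rw [Function.update_of_ne hmm₀, h, Function.update_self,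
              map_zero]
            exact zero_le'
          rw [Function.update_of_ne hmm₀, Function.update_of_ne hm0]
          rcases lt_or_gt_of_ne hmm₀ with hlt | hgt
          · -- m < m₀ : b m = 0
            rw [hmin m (Nat.pos_of_ne_zero hm0) hlt, zero_mul, map_zero]
            exact zero_le'
          · -- m > m₀
            rw [map_mul, hpow, val_single]
            rcases le_or_gt M m with hMm | hmM
            · calc Valued.v (b m) * ofZ (-((j:ℤ) * m))
                  ≤ ofZ (-(d+1)) * ofZ (-((j:ℤ) * m)) := mul_le_mul_left (hM m hMm) _
                _ = ofZ (-(d+1) + -((j:ℤ) * m)) := ofZ_mul _ _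
                _ ≤ ofZ (-(d + (j : ℤ) * m₀ + 1)) := by
                    apply ofZ_le_ofZ
                    have h1 : (j : ℤ) * m₀ ≤ (j : ℤ) * m := by
                      have : (m₀ : ℤ) ≤ (m : ℤ) := by exact_mod_cast hgt.le
                      exact mul_le_mul_of_nonneg_left this (by positivity)
                    linarith
            · calc Valued.v (b m) * ofZ (-((j:ℤ) * m))
                  ≤ ofZ (T' m) * ofZ (-((j:ℤ) * m)) := mul_le_mul_left (hT'spec m) _
                _ = ofZ (T' m + -((j:ℤ) * m)) := ofZ_mul _ _
                _ ≤ ofZ (-(d + (j : ℤ) * m₀ + 1)) := by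
                    apply ofZ_le_ofZ
                    have h1 : (T' m + d + 1).toNat ≤ J := by
                      have h0 : (T' m + d + 1).toNat ≤
                          (Finset.range M).sup (fun m => (T' m + d + 1).toNat) := by
                        simpa using Finset.le_sup (f := fun m => (T' m + d + 1).toNat)
                          (Finset.mem_range.mpr hmM)
                      omega
                    have h2 : T' m + d + 1 ≤ (j : ℤ) := by
                      have h3 : ((T' m + d + 1).toNat : ℤ) ≤ (j : ℤ) := by
                        exact_mod_cast le_trans h1 hj
                      exact le_trans (Int.self_le_toNat _) h3
                    have h4 : (j : ℤ) * m₀ + (j : ℤ) ≤ (j : ℤ) * m := by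
                      have : (m₀ : ℤ) + 1 ≤ (m : ℤ) := by exact_mod_cast hgt
                      nlinarith [Int.ofNat_nonneg j]
                    linarith
        have hvY : Valued.v Y ≤ ofZ (-(d + (j : ℤ) * m₀ + 1)) := val_hasSum_le hY2 hbound
        have hcoeffY : Y.coeff (d + (j : ℤ) * m₀) = 0 :=
          LaurentSeries.coeff_zero_of_lt_valuation 𝔽 hvY (by linarith)
        -- expand the coefficient identity
        have hup : Function.update (fun m : ℕ => b m * s ^ m) 0 0 m₀ = b m₀ * s ^ m₀ :=
          Function.update_of_ne hm₀pos.ne' _ _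
        have hcm₀ : (b m₀ * s ^ m₀).coeff (d + (j : ℤ) * m₀) = (b m₀).coeff d := by
          rw [hpow, HahnSeries.coeff_mul_single_add, mul_one]
        have hkey : (f (p s)).coeff (d + (j : ℤ) * m₀)
            - (f z₀).coeff (d + (j : ℤ) * m₀) = (b m₀).coeff d := by
          have := hcoeffY
          rw [hYdef, hup] at this
          simp only [pow_zero, mul_one, hb0, zero_sub, HahnSeries.coeff_add,
            HahnSeries.coeff_neg, hcm₀] at this
          linear_combination this
        have hne : (f (p s)).coeff (d + (j : ℤ) * m₀) ≠ 0 ∨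
            (f z₀).coeff (d + (j : ℤ) * m₀) ≠ 0 := by
          by_contra h
          push_neg at h
          rw [h.1, h.2] at hkey
          exact hd (by linear_combination -hkey)
        rcases hne with h | h
        · exact hfH (p s) (htU (hBt (hpB s hvs))) _ h
        · exact hfH z₀ hz₀ _ h
      -- two consecutive values give a contradiction
      obtain ⟨k₁, hk₁⟩ := key J le_rfl
      obtain ⟨k₂, hk₂⟩ := key (J + 1) (Nat.le_succ J)
      have hJbig : (m₀ : ℤ) < d + (J : ℤ) * m₀ := by
        have h1 : ((m₀ + 1 - d).toNat : ℤ) ≤ (J : ℤ) := by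
          exact_mod_cast Nat.le_add_left _ _
        have h2 : m₀ + 1 - d ≤ (J : ℤ) := le_trans (Int.self_le_toNat _) h1
        have h3 : (J : ℤ) ≤ (J : ℤ) * m₀ :=
          le_mul_of_one_le_right (by positivity) (by exact_mod_cast hm₀pos)
        linarith
      refine pow2_gap (k₂ := k₂) hk₁ (m := (m₀ : ℤ)) ?_ (by exact_mod_cast hm₀pos) hJbig
      push_cast at hk₂ ⊢
      linear_combination hk₂
    -- conclude
    have hp1 : p 1 = z := by funext i; simp [hpdef, hwdef]
    have h1 := hgroup 1 (by simp)
    rw [hp1] at h1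
    have hfun : (fun m : ℕ => b m * (1 : LaurentSeries 𝔽) ^ m)
        = fun m : ℕ => if m = 0 then b 0 else 0 := by
      funext m
      cases m with
      | zero => simp
      | succ k => simp [hbzero (k + 1) (Nat.succ_pos k)]
    rw [hfun] at h1
    have := (hasSum_ite_eq 0 (b 0)).unique h1
    rw [← this, hb0]
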